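/- Let 1 ≤ k and 2k ≤ n, and let 0 ≤ m ≤ k−2. Then f(n,k,k−m) / f(n,k,k−m−1) = 2^{−(2m+1)}(2^{m+1}−1)² / ((2^{n−k−m}−1)(2^{k−m}−1)) ≤ 2/9. -/
import Mathlib

/-- The Gaussian binomial coefficient `[n choose k]₂`, as a rational number. -/
def gbinomQ (n k : ℕ) : ℚ :=
  (∏ i ∈ Finset.range k, ((2 : ℚ) ^ (n - i) - 1)) /
    (∏ i ∈ Finset.range k, ((2 : ℚ) ^ (k - i) - 1))

/-- `f(n,k,m) = 2^{(k-m)²}·[n-k choose k-m]₂·[k choose m]₂`. -/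
def fQ (n k m : ℕ) : ℚ := 2 ^ ((k - m) ^ 2) * gbinomQ (n - k) (k - m) * gbinomQ k m

lemma num_pos {N k : ℕ} (h : k ≤ N) :
    0 < ∏ i ∈ Finset.range k, ((2 : ℚ) ^ (N - i) - 1) := by
  apply Finset.prod_pos
  intro i hi
  simp only [Finset.mem_range] at hi
  have h1 : 1 ≤ N - i := by omega
  have : (2:ℚ)^1 ≤ 2^(N-i) := pow_le_pow_right₀ (by norm_num) h1
  norm_num at this
  linarith

lemma denom_pos (k : ℕ) :
    0 < ∏ i ∈ Finset.range k, ((2 : ℚ) ^ (k - i) - 1) := num_pos le_rfl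

lemma gbinom_pos {N k : ℕ} (h : k ≤ N) : 0 < gbinomQ N k :=
  div_pos (num_pos h) (denom_pos k)

lemma gbinom_succ (N j : ℕ) :
    gbinomQ N (j+1) = gbinomQ N j * (((2:ℚ)^(N-j)-1) / ((2:ℚ)^(j+1)-1)) := by
  unfold gbinomQ
  rw [Finset.prod_range_succ]
  have hd : ∏ i ∈ Finset.range (j+1), ((2:ℚ)^(j+1-i)-1)
      = (∏ i ∈ Finset.range j, ((2:ℚ)^(j-i)-1)) * ((2:ℚ)^(j+1)-1) := by
    rw [Finset.prod_range_succ']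
    simp [Nat.succ_sub_succ]
  rw [hd, div_mul_div_comm]

/-- For `1 ≤ k`, `2k ≤ n` and `0 ≤ m ≤ k-2`,
`f(n,k,k-m)/f(n,k,k-m-1) = 2^{-(2m+1)}(2^{m+1}-1)²/((2^{n-k-m}-1)(2^{k-m}-1)) ≤ 2/9`. -/
theorem fQ_ratio_eq_and_le {n k m : ℕ} (hk : 1 ≤ k) (hn : 2 * k ≤ n) (hm : m + 2 ≤ k) :
    fQ n k (k - m) / fQ n k (k - m - 1) =
      (2 : ℚ) ^ (-(2 * (m : ℤ) + 1)) * ((2 : ℚ) ^ (m + 1) - 1) ^ 2 /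
        (((2 : ℚ) ^ (n - k - m) - 1) * ((2 : ℚ) ^ (k - m) - 1)) ∧
    fQ n k (k - m) / fQ n k (k - m - 1) ≤ 2 / 9 := by
  obtain ⟨s, hs2, hks⟩ : ∃ s, 2 ≤ s ∧ k = m + s := ⟨k - m, by omega, by omega⟩
  obtain ⟨r, hr⟩ : ∃ r, n - k = m + s + r := ⟨n - k - m - s, by omega⟩
  have hkm : k - m = s := by omega
  have hnkm : n - k - m = s + r := by omega
  rw [hkm, hnkm]
  have hfs : fQ n k s = 2 ^ (m ^ 2) * gbinomQ (m + s + r) m * gbinomQ k s := by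
    unfold fQ
    rw [hr, show k - s = m by omega]
  have hfs1 : fQ n k (s-1) = 2 ^ ((m+1) ^ 2) * gbinomQ (m + s + r) (m+1) * gbinomQ k (s-1) := by
    unfold fQ
    rw [hr, show k - (s-1) = m + 1 by omega]
  have hG1 : gbinomQ (m + s + r) (m+1)
      = gbinomQ (m + s + r) m * (((2:ℚ)^(s+r)-1) / ((2:ℚ)^(m+1)-1)) := by
    rw [gbinom_succ, show m + s + r - m = s + r by omega]
  have hG2 : gbinomQ k s = gbinomQ k (s-1) * (((2:ℚ)^(m+1)-1) / ((2:ℚ)^s-1)) := by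
    conv_lhs => rw [show s = (s-1)+1 by omega]
    rw [gbinom_succ, show k - (s-1) = m + 1 by omega, show s - 1 + 1 = s by omega]
  -- positivity / nonzero facts
  have hGm : (0:ℚ) < gbinomQ (m + s + r) m := gbinom_pos (by omega)
  have hGm1 : (0:ℚ) < gbinomQ (m + s + r) (m+1) := gbinom_pos (by omega)
  have hGk1 : (0:ℚ) < gbinomQ k (s-1) := gbinom_pos (by omega)
  have hGk : fQ n k (s-1) ≠ 0 := by
    rw [hfs1]
    exact ne_of_gt (mul_pos (mul_pos (by positivity) hGm1) hGk1)
  have h2m1 : ((2:ℚ)^(m+1)-1) ≠ 0 := by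
    have : (2:ℚ)^1 ≤ 2^(m+1) := pow_le_pow_right₀ (by norm_num) (by omega)
    norm_num at this; linarith
  have h2s : ((2:ℚ)^s-1) ≠ 0 := by
    have : (2:ℚ)^1 ≤ 2^s := pow_le_pow_right₀ (by norm_num) (by omega)
    norm_num at this; linarith
  have h2sr : ((2:ℚ)^(s+r)-1) ≠ 0 := by
    have : (2:ℚ)^1 ≤ 2^(s+r) := pow_le_pow_right₀ (by norm_num) (by omega)
    norm_num at this; linarith
  have heq : fQ n k s / fQ n k (s-1) =
      (2 : ℚ) ^ (-(2 * (m : ℤ) + 1)) * ((2 : ℚ) ^ (m + 1) - 1) ^ 2 /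
        (((2 : ℚ) ^ (s + r) - 1) * ((2 : ℚ) ^ s - 1)) := by
    rw [hfs, hfs1, hG1, hG2]
    rw [show -(2 * (m : ℤ) + 1) = -((2*m+1 : ℕ) : ℤ) by push_cast; ring,
      zpow_neg, zpow_natCast]
    rw [show (m+1)^2 = m^2 + (2*m+1) by ring, pow_add]
    field_simp
    ring
  refine ⟨heq, ?_⟩
  rw [heq]
  rw [show -(2 * (m : ℤ) + 1) = -((2*m+1 : ℕ) : ℤ) by push_cast; ring,
    zpow_neg, zpow_natCast]
  have hAle : ((2:ℚ) ^ (2*m+1))⁻¹ * ((2:ℚ) ^ (m + 1) - 1) ^ 2 ≤ 2 := by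
    have hp : (0:ℚ) < 2 ^ (2*m+1) := by positivity
    rw [inv_mul_le_iff₀ hp]
    have h1 : ((2:ℚ) ^ (m + 1) - 1) ^ 2 ≤ ((2:ℚ) ^ (m+1)) ^ 2 := by
      have : (0:ℚ) ≤ (2:ℚ)^(m+1) - 1 := by
        have : (2:ℚ)^0 ≤ 2^(m+1) := pow_le_pow_right₀ (by norm_num) (by omega)
        norm_num at this; linarith
      nlinarith
    have h2 : ((2:ℚ)^(m+1))^2 = 2 * 2^(2*m+1) := by
      rw [← pow_mul, show (m+1)*2 = (2*m+1)+1 by ring, pow_succ]; ring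
    linarith
  have hD9 : (9:ℚ) ≤ ((2:ℚ) ^ (s + r) - 1) * ((2:ℚ) ^ s - 1) := by
    have h1 : (2:ℚ)^2 ≤ 2^(s+r) := pow_le_pow_right₀ (by norm_num) (by omega)
    have h2 : (2:ℚ)^2 ≤ 2^s := pow_le_pow_right₀ (by norm_num) (by omega)
    norm_num at h1 h2
    nlinarith
  exact div_le_div₀ (by norm_num) hAle (by norm_num) hD9
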